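/- Let s ≥ 2 be an integer and let g : ℝ → ℝ satisfy: for every admissible digit sequence a, g(∑_{n=0}^∞ a n / s^{n+1}) = ∑_{n=0}^∞ (−1)^{n+1} a n / s^{n+1}. Then g is discontinuous at every s-adic rational point of (0,1): for every x ∈ (0,1) such that s^n · x ∈ ℤ for some n ∈ ℕ, g is not ContinuousWithinAt on [0,1) at x. (Paper's Theorem 1, discontinuity part, for the function f₊.) -/

import Mathlib

/-!
Let `L` be the position of the last nonzero `s`-adic digit of `x`. The points
`x - s ^ (-(L + k + 1))` have the expansion of `x` with that digit lowered by one and followed by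
`k` digits `s - 1`, so they tend to `x` from the left. In the alternating nega-`s`-adic sum,
however, lowering the digit moves the value by `± s ^ (-(L + 1))` and the appended digits move it
further in the same direction (their contribution is an alternating series starting with a term
of that sign), so `g` jumps by at least `s ^ (-(L + 1))` at `x`.
-/

open Finset Filter Topology Function

noncomputable def sAdicValue (s : ℕ) (a : ℕ → ℕ) : ℝ :=
  ∑' n, (a n : ℝ) / (s : ℝ) ^ (n + 1)

noncomputable def negaSAdicValue (s : ℕ) (a : ℕ → ℕ) : ℝ :=
  ∑' n, (-1 : ℝ) ^ (n + 1) * (a n : ℝ) / (s : ℝ) ^ (n + 1)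

noncomputable def sDigit (s : ℕ) (x : ℝ) (n : ℕ) : ℕ :=
  ⌊(s : ℝ) ^ (n + 1) * x⌋₊ % s

section Digits

variable {s : ℕ} {x : ℝ}

lemma sDigit_le (hs : s ≠ 0) (x : ℝ) (n : ℕ) : sDigit s x n ≤ s - 1 :=
  Nat.le_sub_one_of_lt (Nat.mod_lt _ (Nat.pos_of_ne_zero hs))

lemma floor_pow_succ_mul_eq_add_sDigit (x : ℝ) (n : ℕ) :
    ⌊(s : ℝ) ^ (n + 1) * x⌋₊ = s * ⌊(s : ℝ) ^ n * x⌋₊ + sDigit s x n := by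
  rcases Nat.eq_zero_or_pos s with rfl | hs
  · simp [sDigit]
  have hdiv : ⌊(s : ℝ) ^ (n + 1) * x⌋₊ / s = ⌊(s : ℝ) ^ n * x⌋₊ := by
    rw [← Nat.floor_div_natCast, pow_succ, mul_right_comm, mul_div_cancel_right₀]
    exact_mod_cast hs.ne'
  rw [sDigit, ← hdiv, Nat.div_add_mod]

lemma sum_sDigit_div_pow (hx1 : x < 1) (L : ℕ) :
    ∑ n ∈ range L, (sDigit s x n : ℝ) / (s : ℝ) ^ (n + 1) =
      ⌊(s : ℝ) ^ L * x⌋₊ / (s : ℝ) ^ L := by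
  induction L with
  | zero => simp [Nat.floor_eq_zero.mpr hx1]
  | succ L ih =>
    rcases Nat.eq_zero_or_pos s with rfl | hs
    · simp
    rw [sum_range_succ, ih, floor_pow_succ_mul_eq_add_sDigit]
    push_cast
    field_simp
    ring

lemma sDigit_eq_zero_of_pow_mul_eq_natCast {N m : ℕ} (hm : (s : ℝ) ^ N * x = m) {n : ℕ}
    (hn : N ≤ n) : sDigit s x n = 0 := by
  have : (s : ℝ) ^ (n + 1) * x = ((s * (s ^ (n - N) * m) : ℕ) : ℝ) := by
    rw [show n + 1 = 1 + (n - N) + N by omega, pow_add, pow_add, mul_assoc, hm]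
    push_cast
    ring
  rw [sDigit, this, Nat.floor_natCast, Nat.mul_mod_right]

lemma sAdicValue_sDigit (hs : s ≠ 0) (hx1 : x < 1) {N m : ℕ} (hm : (s : ℝ) ^ N * x = m) :
    sAdicValue s (sDigit s x) = x := by
  rw [sAdicValue, tsum_eq_sum (s := range N) fun n hn => by
    rw [sDigit_eq_zero_of_pow_mul_eq_natCast hm (by simpa using hn)]; simp,
    sum_sDigit_div_pow hx1, hm, Nat.floor_natCast, ← hm]
  field_simp

lemma exists_sDigit_ne_zero_forall_gt_eq_zero (hs : s ≠ 0) (hx0 : 0 < x) (hx1 : x < 1)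
    {N m : ℕ} (hm : (s : ℝ) ^ N * x = m) : ∃ L, sDigit s x L ≠ 0 ∧ ∀ n > L, sDigit s x n = 0 := by
  classical
  have hfin : ∃ N, ∀ n ≥ N, sDigit s x n = 0 :=
    ⟨N, fun n => sDigit_eq_zero_of_pow_mul_eq_natCast hm⟩
  obtain ⟨L, hL⟩ : ∃ L, Nat.find hfin = L + 1 := Nat.exists_eq_succ_of_ne_zero fun h0 => by
    have hzero : sDigit s x = 0 := funext fun n => (Nat.find_eq_zero hfin).1 h0 n n.zero_le
    have hx := sAdicValue_sDigit hs hx1 hm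
    simp [hzero, sAdicValue] at hx
    linarith
  refine ⟨L, fun hL0 => ?_, fun n hn => Nat.find_spec hfin n (by omega)⟩
  have : Nat.find hfin ≤ L := Nat.find_min' hfin fun n hn => by
    rcases hn.eq_or_lt with rfl | hn
    exacts [hL0, Nat.find_spec hfin n (by omega)]
  omega

end Digits

lemma tsum_comp_update {F : ℕ → ℕ → ℝ} (hF : ∀ n, F n 0 = 0) {f : ℕ → ℕ} {M : ℕ}
    (hf : ∀ n > M, f n = 0) (d : ℕ) :
    ∑' n, F n (update f M d n) = ∑' n, F n (f n) + (F M d - F M (f M)) := by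
  have htsum (g : ℕ → ℕ) (hg : ∀ n > M, g n = 0) :
      ∑' n, F n (g n) = ∑ n ∈ range (M + 1), F n (g n) :=
    tsum_eq_sum fun n hn => by rw [hg n (by simpa using hn), hF]
  have hlow : ∑ n ∈ range M, F n (update f M d n) = ∑ n ∈ range M, F n (f n) :=
    sum_congr rfl fun n hn => by rw [update_of_ne (mem_range.1 hn).ne]
  rw [htsum f hf, htsum _ fun n hn => by rw [update_of_ne hn.ne']; exact hf n hn,
    sum_range_succ, sum_range_succ, update_self, hlow]
  ring

section Update

variable {s : ℕ} {a : ℕ → ℕ} {M : ℕ}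

lemma sAdicValue_update (ha : ∀ n > M, a n = 0) (d : ℕ) :
    sAdicValue s (update a M d) = sAdicValue s a + ((d : ℝ) - a M) / (s : ℝ) ^ (M + 1) := by
  rw [sAdicValue, sAdicValue, tsum_comp_update (F := fun n d => (d : ℝ) / (s : ℝ) ^ (n + 1))
    (fun n => by simp) ha, sub_div]

lemma negaSAdicValue_update (ha : ∀ n > M, a n = 0) (d : ℕ) :
    negaSAdicValue s (update a M d) =
      negaSAdicValue s a + (-1 : ℝ) ^ (M + 1) * ((d : ℝ) - a M) / (s : ℝ) ^ (M + 1) := by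
  rw [negaSAdicValue, negaSAdicValue,
    tsum_comp_update (F := fun n d => (-1 : ℝ) ^ (n + 1) * d / (s : ℝ) ^ (n + 1))
    (fun n => by simp) ha]
  ring

end Update

lemma not_eventually_eq_of_forall_gt_eq_zero {a : ℕ → ℕ} {M c : ℕ} (hc : c ≠ 0)
    (ha : ∀ n > M, a n = 0) : ¬ ∃ N, ∀ n ≥ N, a n = c := by
  rintro ⟨N, hN⟩
  exact hc ((hN (max N (M + 1)) (le_max_left _ _)).symm.trans (ha _ (by omega)))

def lowerApprox (s : ℕ) (a : ℕ → ℕ) (L : ℕ) : ℕ → ℕ → ℕ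
  | 0 => update a L (a L - 1)
  | k + 1 => update (lowerApprox s a L k) (L + k + 1) (s - 1)

section LowerApprox

variable {s : ℕ} {a : ℕ → ℕ} {L : ℕ}

lemma lowerApprox_le (ha : ∀ n, a n ≤ s - 1) (k n : ℕ) : lowerApprox s a L k n ≤ s - 1 := by
  induction k generalizing n with
  | zero =>
    rw [lowerApprox, update_apply]
    split_ifs with h
    · exact (Nat.sub_le _ _).trans (ha L)
    · exact ha n
  | succ k ih =>
    rw [lowerApprox, update_apply]
    split_ifs
    exacts [le_rfl, ih n]

lemma lowerApprox_eq_zero (ha : ∀ n > L, a n = 0) (k : ℕ) :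
    ∀ n > L + k, lowerApprox s a L k n = 0 := by
  induction k with
  | zero => intro n hn; rw [lowerApprox, update_of_ne (by omega), ha n (by omega)]
  | succ k ih =>
    intro n hn
    rw [lowerApprox, update_of_ne (by omega), ih n (by omega)]

lemma sAdicValue_lowerApprox (ha : ∀ n > L, a n = 0) (haL : a L ≠ 0) (k : ℕ) :
    sAdicValue s (lowerApprox s a L k) = sAdicValue s a - 1 / (s : ℝ) ^ (L + k + 1) := by
  induction k with
  | zero =>
    rw [lowerApprox, sAdicValue_update ha, Nat.cast_sub (Nat.one_le_iff_ne_zero.2 haL)]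
    ring
  | succ k ih =>
    rw [lowerApprox, sAdicValue_update (M := L + k + 1)
      (fun n hn => lowerApprox_eq_zero ha k n (by omega)), ih,
      lowerApprox_eq_zero ha k _ (by omega)]
    rcases Nat.eq_zero_or_pos s with rfl | hs
    · simp
    rw [Nat.cast_sub hs]
    field_simp
    ring

lemma negaSAdicValue_lowerApprox (ha : ∀ n > L, a n = 0) (haL : a L ≠ 0) (k : ℕ) :
    negaSAdicValue s (lowerApprox s a L k) = negaSAdicValue s a + (-1 : ℝ) ^ L / (s : ℝ) ^ (L + 1) *
      (1 + (s - 1) / (s + 1) * (1 - (-1) ^ k / (s : ℝ) ^ k)) := by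
  induction k with
  | zero =>
    rw [lowerApprox, negaSAdicValue_update ha, Nat.cast_sub (Nat.one_le_iff_ne_zero.2 haL)]
    ring
  | succ k ih =>
    rw [lowerApprox, negaSAdicValue_update (M := L + k + 1)
      (fun n hn => lowerApprox_eq_zero ha k n (by omega)), ih,
      lowerApprox_eq_zero ha k _ (by omega)]
    rcases Nat.eq_zero_or_pos s with rfl | hs
    · simp
    rw [Nat.cast_sub hs]
    field_simp
    ring

lemma tendsto_sAdicValue_lowerApprox (hs : 1 < s) (ha : ∀ n > L, a n = 0) (haL : a L ≠ 0) :
    Tendsto (fun k => sAdicValue s (lowerApprox s a L k)) atTop (𝓝 (sAdicValue s a)) := by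
  simp_rw [sAdicValue_lowerApprox ha haL, one_div, ← inv_pow]
  have hpow : Tendsto (fun k => (s : ℝ)⁻¹ ^ (L + k + 1)) atTop (𝓝 0) :=
    (tendsto_pow_atTop_nhds_zero_of_lt_one (by positivity)
      (inv_lt_one_of_one_lt₀ (by exact_mod_cast hs))).comp
      (tendsto_atTop_mono (fun k => show k ≤ L + k + 1 by omega) tendsto_id)
  simpa using tendsto_const_nhds.sub hpow

lemma le_abs_negaSAdicValue_lowerApprox_sub (hs : 1 ≤ s) (ha : ∀ n > L, a n = 0) (haL : a L ≠ 0)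
    (k : ℕ) :
    1 / (s : ℝ) ^ (L + 1) ≤ |negaSAdicValue s (lowerApprox s a L k) - negaSAdicValue s a| := by
  have hs' : (1 : ℝ) ≤ s := by exact_mod_cast hs
  have hpow : (-1 : ℝ) ^ k / (s : ℝ) ^ k ≤ 1 := by
    rw [div_le_one (by positivity)]
    calc (-1 : ℝ) ^ k ≤ 1 := by rcases neg_one_pow_eq_or ℝ k with h | h <;> simp [h]
      _ ≤ (s : ℝ) ^ k := one_le_pow₀ hs'
  have hfac : 0 ≤ ((s : ℝ) - 1) / (s + 1) * (1 - (-1) ^ k / (s : ℝ) ^ k) :=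
    mul_nonneg (div_nonneg (by linarith) (by positivity)) (by linarith)
  rw [negaSAdicValue_lowerApprox ha haL, add_sub_cancel_left, abs_mul, abs_div, abs_pow,
    abs_neg, abs_one, one_pow, abs_of_pos (by positivity), abs_of_nonneg (by linarith)]
  exact le_mul_of_one_le_right (by positivity) (by linarith)

end LowerApprox

lemma not_continuousWithinAt_of_le_dist {α β ι : Type*} [TopologicalSpace α]
    [PseudoMetricSpace β] {l : Filter ι} [l.NeBot] {g : α → β} {S : Set α} {x : α} {y : ι → α}
    (hy : Tendsto y l (𝓝[S] x)) {ε : ℝ} (hε : 0 < ε) (hgap : ∀ i, ε ≤ dist (g (y i)) (g x)) :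
    ¬ ContinuousWithinAt g S x := fun hg =>
  let ⟨i, hi⟩ := ((hg.tendsto.comp hy).eventually (Metric.ball_mem_nhds _ hε)).exists
  (hgap i).not_gt hi

theorem stmt_13 (s : ℕ) (hs : 2 ≤ s) (g : ℝ → ℝ)
    (hg : ∀ a : ℕ → ℕ, (∀ n, a n ≤ s - 1) → (¬ ∃ N, ∀ n ≥ N, a n = s - 1) →
      g (∑' n : ℕ, (a n : ℝ) / (s : ℝ) ^ (n + 1)) =
        ∑' n : ℕ, (-1 : ℝ) ^ (n + 1) * (a n : ℝ) / (s : ℝ) ^ (n + 1)) :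
    ∀ x ∈ Set.Ioo (0 : ℝ) 1, (∃ n : ℕ, ∃ m : ℤ, (s : ℝ) ^ n * x = (m : ℝ)) →
      ¬ ContinuousWithinAt g (Set.Ico 0 1) x := by
  rintro x ⟨hx0, hx1⟩ ⟨N, m, hm⟩
  lift m to ℕ using by exact_mod_cast hm ▸ (by positivity : 0 ≤ (s : ℝ) ^ N * x)
  set a := sDigit s x
  obtain ⟨L, haL, ha⟩ := exists_sDigit_ne_zero_forall_gt_eq_zero (by omega) hx0 hx1 hm
  have hxa : sAdicValue s a = x := sAdicValue_sDigit (by omega) hx1 hm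
  have hga {c : ℕ → ℕ} (hc : ∀ n, c n ≤ s - 1) {M : ℕ} (hcM : ∀ n > M, c n = 0) :
      g (sAdicValue s c) = negaSAdicValue s c :=
    hg c hc (not_eventually_eq_of_forall_gt_eq_zero (by omega) hcM)
  have hda : ∀ n, a n ≤ s - 1 := sDigit_le (by omega) x
  refine not_continuousWithinAt_of_le_dist (y := fun k => sAdicValue s (lowerApprox s a L k))
    (tendsto_nhdsWithin_iff.2 ⟨hxa ▸ tendsto_sAdicValue_lowerApprox (by omega) ha haL,
      Eventually.of_forall fun k => ⟨tsum_nonneg fun n => by positivity, ?_⟩⟩)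
    (by positivity : (0 : ℝ) < 1 / (s : ℝ) ^ (L + 1)) fun k => ?_
  · rw [sAdicValue_lowerApprox ha haL, hxa]
    have : (0 : ℝ) < 1 / (s : ℝ) ^ (L + k + 1) := by positivity
    linarith
  · rw [Real.dist_eq, ← hxa, hga (lowerApprox_le hda k) (lowerApprox_eq_zero ha k), hga hda ha]
    exact le_abs_negaSAdicValue_lowerApprox_sub (by omega) ha haL k
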